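/- For every integer d ≥ 1, every d-regular finite simple graph G on n ≥ 1 vertices, and every real λ > 0, the hard-core occupancy fraction of G is at most that of K_{d,d}; explicitly, (1/n) · (∑_{I ∈ I(G)} |I|·λ^{|I|}) / (∑_{I ∈ I(G)} λ^{|I|}) ≤ (1/(2d)) · (∑_{I ∈ I(K_{d,d})} |I|·λ^{|I|}) / (∑_{I ∈ I(K_{d,d})} λ^{|I|}). -/

import Mathlib

/-!
Fix a vertex `v` and condition the hard-core measure on `J = I \ N[v]`. Given `J`, either
`I = J ∪ {v}`, or `I = J ∪ S` with `S` an independent set among the free neighbours of `v` (those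
with no neighbour in `J`), of which there are at most `d`. For any graph on at most `d` vertices
the number `i_k` of independent `k`-sets satisfies `(k + 1) i_{k+1} ≤ (d - k) i_k`, so
`i_k / C(d, k)` is nonincreasing and, by Chebyshev's sum inequality, the `λ`-weighted mean size of
a nonempty independent set is at most that of a nonempty subset of a `d`-set. This yields, for each
`v`, an inequality between `P(v ∈ I)` and `E |I ∩ N(v)|`; summing it over `v` and using
`∑ v, |I ∩ N(v)| = d |I|` bounds the occupancy fraction by `λ (1 + λ)^(d-1) / (2 (1 + λ)^d - 1)`,
which is exactly the occupancy fraction of `K_{d,d}`.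
-/

open Finset
open scoped Classical

variable {V : Type} [Fintype V] [DecidableEq V]

/-- `M` is a matching of `G`: a finite set of edges of `G` that are pairwise vertex-disjoint. -/
def IsMatchingFinset (G : SimpleGraph V) (M : Finset (Sym2 V)) : Prop :=
  (∀ e ∈ M, e ∈ G.edgeSet) ∧
    ∀ e ∈ M, ∀ f ∈ M, e ≠ f → ∀ v : V, v ∈ e → v ∉ f

/-- `I` is an independent set of `G`: a finite set of pairwise non-adjacent vertices. -/
def IsIndepFinset (G : SimpleGraph V) (I : Finset V) : Prop :=
  ∀ u ∈ I, ∀ v ∈ I, ¬ G.Adj u v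

/-- `G` is `d`-regular: every vertex has exactly `d` neighbors. -/
def IsRegularGraph (G : SimpleGraph V) (d : ℕ) : Prop :=
  ∀ v : V, (Finset.univ.filter fun w => G.Adj v w).card = d

/-- The matching polynomial (monomer-dimer partition function) of `G` at fugacity `lam`. -/
noncomputable def Zmatch (G : SimpleGraph V) (lam : ℝ) : ℝ :=
  ∑ M ∈ Finset.univ.filter (fun M : Finset (Sym2 V) => IsMatchingFinset G M), lam ^ M.card

/-- The independence polynomial (hard-core partition function) of `G` at fugacity `lam`. -/
noncomputable def Zind (G : SimpleGraph V) (lam : ℝ) : ℝ :=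
  ∑ I ∈ Finset.univ.filter (fun I : Finset V => IsIndepFinset G I), lam ^ I.card

/-- `m_k(G)`: the number of matchings of size `k` in `G`. -/
noncomputable def matchCount (G : SimpleGraph V) (k : ℕ) : ℕ :=
  (Finset.univ.filter fun M : Finset (Sym2 V) => IsMatchingFinset G M ∧ M.card = k).card

/-- `i_k(G)`: the number of independent sets of size `k` in `G`. -/
noncomputable def indepCount (G : SimpleGraph V) (k : ℕ) : ℕ :=
  (Finset.univ.filter fun I : Finset V => IsIndepFinset G I ∧ I.card = k).card

/-- The number of monochromatic edges of `G` under the coloring `χ`. -/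
noncomputable def monoCount (G : SimpleGraph V) {q : ℕ} (χ : V → Fin q) : ℕ :=
  (Finset.univ.filter fun e : Sym2 V =>
    e ∈ G.edgeSet ∧ ∀ v ∈ e, ∀ w ∈ e, χ v = χ w).card

/-- `c^q_k(G)`: the number of `q`-colorings of `G` with exactly `k` monochromatic edges. -/
noncomputable def colCount (G : SimpleGraph V) (q k : ℕ) : ℕ :=
  (Finset.univ.filter fun χ : V → Fin q => monoCount G χ = k).card

/-- The disjoint union of `m` copies of the graph `H`. -/
def copies (m : ℕ) {W : Type} (H : SimpleGraph W) : SimpleGraph (Fin m × W) where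
  Adj a b := a.1 = b.1 ∧ H.Adj a.2 b.2
  symm := ⟨fun a b h => ⟨h.1.symm, h.2.symm⟩⟩
  loopless := ⟨fun a h => H.loopless.irrefl a.2 h.2⟩

/-- `H_{d,n}` for `n = 2dm`: the disjoint union of `m` copies of `K_{d,d}`. -/
def Hgraph (d m : ℕ) : SimpleGraph (Fin m × (Fin d ⊕ Fin d)) :=
  copies m (completeBipartiteGraph (Fin d) (Fin d))

/-- `∑_{I ∈ I(G)} |I|·λ^{|I|}`, the numerator of the hard-core occupancy fraction. -/
noncomputable def indEnergy (G : SimpleGraph V) (lam : ℝ) : ℝ :=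
  ∑ I ∈ Finset.univ.filter (fun I : Finset V => IsIndepFinset G I),
    (I.card : ℝ) * lam ^ I.card

/-- Weighted Chebyshev: if `p / q` is nondecreasing, the `q`-mean of a monotone `x` is at most its
`p`-mean. -/
theorem Finset.sum_mul_sum_le_of_cross_le {ι : Type*} [LinearOrder ι] {s : Finset ι}
    {x p q : ι → ℝ} (hx : Monotone x)
    (hpq : ∀ a ∈ s, ∀ i ∈ s, a ≤ i → p a * q i ≤ p i * q a) :
    (∑ a ∈ s, p a) * ∑ i ∈ s, x i * q i ≤ (∑ a ∈ s, x a * p a) * ∑ i ∈ s, q i := by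
  have hterm : ∀ a ∈ s, ∀ i ∈ s, (p a * q i - p i * q a) * (x i - x a) ≤ 0 := by
    intro a ha i hi
    rcases le_total a i with h | h
    · exact mul_nonpos_of_nonpos_of_nonneg (sub_nonpos.2 (hpq a ha i hi h)) (sub_nonneg.2 (hx h))
    · exact mul_nonpos_of_nonneg_of_nonpos (sub_nonneg.2 (hpq i hi a ha h)) (sub_nonpos.2 (hx h))
  have hsymm : ∑ a ∈ s, ∑ i ∈ s, (p a * q i - p i * q a) * (x i - x a) =
      2 * ((∑ a ∈ s, p a) * ∑ i ∈ s, x i * q i - (∑ a ∈ s, x a * p a) * ∑ i ∈ s, q i) := by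
    have hswap : ∑ a ∈ s, ∑ i ∈ s, p i * q a * (x i - x a) =
        -∑ a ∈ s, ∑ i ∈ s, p a * q i * (x i - x a) := by
      rw [sum_comm, ← sum_neg_distrib]
      refine sum_congr rfl fun a _ => ?_
      rw [← sum_neg_distrib]
      exact sum_congr rfl fun i _ => by ring
    calc _ = ∑ a ∈ s, ∑ i ∈ s, p a * q i * (x i - x a)
          - ∑ a ∈ s, ∑ i ∈ s, p i * q a * (x i - x a) := by
          simp only [sub_mul, sum_sub_distrib]
      _ = 2 * ∑ a ∈ s, ∑ i ∈ s, p a * q i * (x i - x a) := by rw [hswap]; ring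
      _ = _ := by
          rw [sum_mul_sum, sum_mul_sum, ← sum_sub_distrib]
          refine congrArg _ (sum_congr rfl fun a _ => ?_)
          rw [← sum_sub_distrib]
          exact sum_congr rfl fun i _ => by ring
  linarith [sum_nonpos fun a ha => sum_nonpos fun i hi => hterm a ha i hi]

theorem sum_range_choose_mul_pow {R : Type*} [CommSemiring R] (n : ℕ) (x : R) :
    ∑ m ∈ range (n + 1), (n.choose m : R) * x ^ m = (1 + x) ^ n := by
  rw [add_comm 1 x, add_pow]
  exact sum_congr rfl fun m _ => by rw [one_pow, mul_one, mul_comm]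

theorem sum_range_choose_mul_mul_pow {R : Type*} [CommSemiring R] (n : ℕ) (x : R) :
    ∑ m ∈ range (n + 1), (n.choose m : R) * (m * x ^ m) = n * x * (1 + x) ^ (n - 1) := by
  cases n with
  | zero => simp
  | succ n =>
    rw [sum_range_succ', Nat.add_sub_cancel, ← sum_range_choose_mul_pow, mul_sum]
    simp only [Nat.cast_zero, zero_mul, mul_zero, add_zero]
    refine sum_congr rfl fun m _ => ?_
    have h : ((n + 1).choose (m + 1) : R) * ((m + 1 : ℕ) : R) = (n + 1 : ℕ) * (n.choose m : ℕ) := by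
      rw [← Nat.cast_mul, ← Nat.cast_mul, Nat.add_one_mul_choose_eq]
    calc ((n + 1).choose (m + 1) : R) * (((m + 1 : ℕ) : R) * x ^ (m + 1))
        = ((n + 1).choose (m + 1) : R) * ((m + 1 : ℕ) : R) * x ^ m * x := by ring
      _ = ((n + 1 : ℕ) : R) * x * ((n.choose m : R) * x ^ m) := by rw [h]; ring

theorem natCast_mul_mul_pow_sub_one_mul {R : Type*} [CommSemiring R] (n : ℕ) (x y : R) :
    n * x * y ^ (n - 1) * y = n * x * y ^ n := by
  cases n with
  | zero => simp
  | succ n => rw [Nat.add_sub_cancel, mul_assoc, ← pow_succ]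

section IndependentSubsets

variable {U : Type} {G : SimpleGraph U}

theorem IsIndepFinset.mono {I J : Finset U} (hJ : IsIndepFinset G J)
    (hIJ : I ⊆ J) : IsIndepFinset G I :=
  fun u hu w hw => hJ u (hIJ hu) w (hIJ hw)

variable (G) in
theorem isIndepFinset_empty : IsIndepFinset G ∅ := by
  simp [IsIndepFinset]

theorem isIndepFinset_union_iff [DecidableEq U] {A B : Finset U} :
    IsIndepFinset G (A ∪ B) ↔
      IsIndepFinset G A ∧ IsIndepFinset G B ∧ ∀ a ∈ A, ∀ b ∈ B, ¬ G.Adj a b := by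
  refine ⟨fun h => ⟨h.mono subset_union_left, h.mono subset_union_right,
    fun a ha b hb => h a (mem_union_left _ ha) b (mem_union_right _ hb)⟩, ?_⟩
  rintro ⟨hA, hB, hAB⟩ u hu w hw
  rcases mem_union.1 hu with hu | hu <;> rcases mem_union.1 hw with hw | hw
  · exact hA u hu w hw
  · exact hAB u hu w hw
  · exact fun h => hAB w hw u hu h.symm
  · exact hB u hu w hw

variable (G) in
noncomputable def indepSubsets (F : Finset U) : Finset (Finset U) :=
  F.powerset.filter (IsIndepFinset G)

variable (G) in
noncomputable def indepSubsetCount (F : Finset U) (j : ℕ) : ℕ :=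
  #((indepSubsets G F).filter fun S => #S = j)

@[simp]
theorem mem_indepSubsets {F S : Finset U} :
    S ∈ indepSubsets G F ↔ S ⊆ F ∧ IsIndepFinset G S := by
  rw [indepSubsets, mem_filter, mem_powerset]

theorem indepSubsetCount_zero (F : Finset U) : indepSubsetCount G F 0 = 1 := by
  rw [indepSubsetCount, card_eq_one]
  refine ⟨∅, eq_singleton_iff_unique_mem.2 ⟨?_, fun S hS => card_eq_zero.1 (mem_filter.1 hS).2⟩⟩
  simp [isIndepFinset_empty]

theorem indepSubsetCount_succ_mul_le [DecidableEq U] (F : Finset U) (j : ℕ) :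
    indepSubsetCount G F (j + 1) * (j + 1) ≤ indepSubsetCount G F j * (#F - j) := by
  refine card_mul_le_card_mul (fun A B => B ⊆ A) (fun A hA => ?_) (fun B hB => ?_)
  · obtain ⟨hA, hAcard⟩ := mem_filter.1 hA
    rw [← Nat.choose_succ_self_right, ← hAcard, ← card_powersetCard]
    refine card_le_card fun B hB => ?_
    obtain ⟨hBA, hBcard⟩ := mem_powersetCard.1 hB
    have hA := mem_indepSubsets.1 hA
    simp only [bipartiteAbove, mem_filter, mem_indepSubsets]
    exact ⟨⟨⟨hBA.trans hA.1, hA.2.mono hBA⟩, hBcard⟩, hBA⟩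
  · obtain ⟨hB, hBcard⟩ := mem_filter.1 hB
    have hBF := (mem_indepSubsets.1 hB).1
    rw [← hBcard, ← card_sdiff_of_subset hBF, ← Nat.choose_one_right #(F \ B), ← card_powersetCard]
    refine card_le_card_of_injOn (· \ B) (fun A hA => ?_) (fun A hA A' hA' h => ?_)
    · simp only [bipartiteBelow, mem_coe, mem_filter, mem_indepSubsets] at hA
      rw [mem_coe, mem_powersetCard, card_sdiff_of_subset hA.2, hA.1.2, hBcard]
      exact ⟨sdiff_subset_sdiff hA.1.1.1 le_rfl, by omega⟩
    · simp only [bipartiteBelow, mem_coe, mem_filter] at hA hA'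
      rw [← union_sdiff_of_subset hA.2, ← union_sdiff_of_subset hA'.2]
      exact congrArg (B ∪ ·) h

theorem choose_mul_indepSubsetCount_le [DecidableEq U] {F : Finset U} {d : ℕ} (hF : #F ≤ d)
    {a i : ℕ} (hai : a ≤ i) :
    d.choose a * indepSubsetCount G F i ≤ d.choose i * indepSubsetCount G F a := by
  induction i, hai using Nat.le_induction with
  | base => exact le_rfl
  | succ i hai ih =>
    refine Nat.le_of_mul_le_mul_right ?_ i.succ_pos
    calc d.choose a * indepSubsetCount G F (i + 1) * (i + 1)
        ≤ d.choose a * (indepSubsetCount G F i * (d - i)) := by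
          rw [mul_assoc]
          exact Nat.mul_le_mul_left _ ((indepSubsetCount_succ_mul_le F i).trans
            (Nat.mul_le_mul_left _ (Nat.sub_le_sub_right hF i)))
      _ ≤ d.choose i * indepSubsetCount G F a * (d - i) := by
          rw [← mul_assoc]
          exact Nat.mul_le_mul_right _ ih
      _ = d.choose (i + 1) * indepSubsetCount G F a * (i + 1) := by
          rw [mul_right_comm, ← Nat.choose_succ_right_eq, mul_right_comm]

theorem sum_indepSubsets_eq_sum_range {M : Type*} [AddCommMonoid M] {F : Finset U} {d : ℕ}
    (hF : #F ≤ d) (f : ℕ → M) :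
    ∑ S ∈ indepSubsets G F, f #S = ∑ j ∈ range (d + 1), indepSubsetCount G F j • f j := by
  rw [← sum_fiberwise_of_maps_to (g := card) (t := range (d + 1)) fun S hS =>
    mem_range.2 (Nat.lt_succ_of_le ((card_le_card (mem_indepSubsets.1 hS).1).trans hF))]
  refine sum_congr rfl fun j _ => ?_
  rw [sum_congr rfl fun S hS => congrArg f (mem_filter.1 hS).2, sum_const, indepSubsetCount]

/-- The `lam`-weighted mean size of a nonempty independent set of `G[F]` is at most that of a
nonempty subset of a `d`-set. -/
theorem sum_card_mul_pow_indepSubsets_le [DecidableEq U] {F : Finset U} {d : ℕ} (hF : #F ≤ d)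
    {lam : ℝ} (hlam : 0 ≤ lam) :
    ((1 + lam) ^ d - 1) * ∑ S ∈ indepSubsets G F, (#S : ℝ) * lam ^ #S ≤
      d * lam * (1 + lam) ^ (d - 1) * (∑ S ∈ indepSubsets G F, lam ^ #S - 1) := by
  have hsplit := fun f : ℕ → ℝ => sum_range_eq_add_Ico f d.succ_pos
  have hP : (1 + lam) ^ d - 1 = ∑ a ∈ Ico 1 (d + 1), (d.choose a : ℝ) * lam ^ a := by
    rw [← sum_range_choose_mul_pow, hsplit]
    simp
  have hQ : d * lam * (1 + lam) ^ (d - 1) =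
      ∑ a ∈ Ico 1 (d + 1), (a : ℝ) * ((d.choose a : ℝ) * lam ^ a) := by
    rw [← sum_range_choose_mul_mul_pow, hsplit]
    simp [mul_left_comm]
  have hZ : ∑ S ∈ indepSubsets G F, lam ^ #S - 1 =
      ∑ j ∈ Ico 1 (d + 1), (indepSubsetCount G F j : ℝ) * lam ^ j := by
    rw [sum_indepSubsets_eq_sum_range hF, hsplit, indepSubsetCount_zero]
    simp [nsmul_eq_mul]
  have hW : ∑ S ∈ indepSubsets G F, (#S : ℝ) * lam ^ #S =
      ∑ j ∈ Ico 1 (d + 1), (j : ℝ) * ((indepSubsetCount G F j : ℝ) * lam ^ j) := by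
    rw [sum_indepSubsets_eq_sum_range hF (fun j => (j : ℝ) * lam ^ j), hsplit]
    simp only [Nat.cast_zero, zero_mul, smul_zero, zero_add, nsmul_eq_mul]
    exact sum_congr rfl fun j _ => by ring
  rw [hP, hQ, hZ, hW]
  refine sum_mul_sum_le_of_cross_le Nat.mono_cast fun a _ i _ hai => ?_
  have hchain : ((d.choose a * indepSubsetCount G F i : ℕ) : ℝ) ≤
      (d.choose i * indepSubsetCount G F a : ℕ) :=
    Nat.cast_le.2 (choose_mul_indepSubsetCount_le hF hai)
  push_cast at hchain
  calc (d.choose a : ℝ) * lam ^ a * (indepSubsetCount G F i * lam ^ i)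
      = d.choose a * indepSubsetCount G F i * (lam ^ a * lam ^ i) := by ring
    _ ≤ d.choose i * indepSubsetCount G F a * (lam ^ a * lam ^ i) :=
        mul_le_mul_of_nonneg_right hchain (by positivity)
    _ = d.choose i * lam ^ i * (indepSubsetCount G F a * lam ^ a) := by ring

end IndependentSubsets

section Local

variable {G : SimpleGraph V}

theorem sum_indepSubsets_univ_eq_sum_sdiff_inter {M : Type*} [AddCommMonoid M] (C : Finset V)
    (g : Finset V → M) :
    ∑ I ∈ indepSubsets G univ, g I =
      ∑ J ∈ (indepSubsets G univ).filter (Disjoint · C),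
        ∑ T ∈ C.powerset.filter (fun T => IsIndepFinset G (J ∪ T)), g (J ∪ T) := by
  rw [sum_sigma']
  refine sum_nbij' (fun I => ⟨I \ C, I ∩ C⟩) (fun x => x.1 ∪ x.2) (fun I hI => ?_) (fun x hx => ?_)
    (fun I _ => sdiff_union_inter I C) (fun x hx => ?_) (fun I _ => by rw [sdiff_union_inter])
  · have hI := (mem_indepSubsets.1 hI).2
    simp only [mem_sigma, mem_filter, mem_indepSubsets, mem_powerset, sdiff_union_inter]
    exact ⟨⟨⟨subset_univ _, hI.mono sdiff_subset⟩, sdiff_disjoint⟩, inter_subset_right, hI⟩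
  · simp only [mem_sigma, mem_filter, mem_powerset] at hx
    exact mem_indepSubsets.2 ⟨subset_univ _, hx.2.2⟩
  · simp only [mem_sigma, mem_filter, mem_powerset] at hx
    obtain ⟨⟨-, hJC⟩, hTC, -⟩ := hx
    rw [union_sdiff_distrib, sdiff_eq_self_of_disjoint hJC, sdiff_eq_empty_iff_subset.2 hTC,
      union_empty, union_inter_distrib_right, disjoint_iff_inter_eq_empty.1 hJC, empty_union,
      inter_eq_left.2 hTC]

variable (G) in
noncomputable def freeNeighbors (v : V) (J : Finset V) : Finset V :=
  (G.neighborFinset v).filter fun u => ∀ w ∈ J, ¬ G.Adj u w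

theorem freeNeighbors_subset (v : V) (J : Finset V) : freeNeighbors G v J ⊆ G.neighborFinset v :=
  filter_subset _ _

theorem filter_isIndepFinset_union_closedNeighborhood {v : V} {J : Finset V}
    (hJ : IsIndepFinset G J) (hJv : Disjoint J (insert v (G.neighborFinset v))) :
    (insert v (G.neighborFinset v)).powerset.filter (fun T => IsIndepFinset G (J ∪ T)) =
      insert {v} (indepSubsets G (freeNeighbors G v J)) := by
  have hvJ : ∀ w ∈ J, ¬ G.Adj v w := fun w hw hvw =>
    disjoint_left.1 hJv hw (mem_insert_of_mem ((G.mem_neighborFinset v w).2 hvw))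
  ext T
  simp only [mem_filter, mem_powerset, mem_insert, mem_indepSubsets, isIndepFinset_union_iff,
    freeNeighbors, subset_iff, mem_filter, G.mem_neighborFinset]
  constructor
  · rintro ⟨hTC, -, hT, hJT⟩
    by_cases hvT : v ∈ T
    · left
      refine eq_singleton_iff_unique_mem.2 ⟨hvT, fun u hu => ?_⟩
      exact (hTC hu).resolve_right fun hvu => hT v hvT u hu hvu
    · right
      refine ⟨fun u hu => ⟨(hTC hu).resolve_left fun h => hvT (h ▸ hu), fun w hw hwu => ?_⟩, hT⟩
      exact hJT w hw u hu hwu.symm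
  · rintro (rfl | ⟨hTF, hT⟩)
    · simp only [mem_singleton, forall_eq, true_or, true_and, hJ]
      exact ⟨by simp [IsIndepFinset], fun w hw h => hvJ w hw h.symm⟩
    · exact ⟨fun u hu => Or.inr (hTF hu).1, hJ, hT, fun w hw u hu h => (hTF hu).2 w hw h.symm⟩

theorem sum_indepSubsets_univ_eq_sum_closedNeighborhood {M : Type*} [AddCommMonoid M] (v : V)
    (g : Finset V → M) :
    ∑ I ∈ indepSubsets G univ, g I =
      ∑ J ∈ (indepSubsets G univ).filter (Disjoint · (insert v (G.neighborFinset v))),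
        (g (J ∪ {v}) + ∑ S ∈ indepSubsets G (freeNeighbors G v J), g (J ∪ S)) := by
  rw [sum_indepSubsets_univ_eq_sum_sdiff_inter (insert v (G.neighborFinset v))]
  refine sum_congr rfl fun J hJ => ?_
  obtain ⟨hJ, hJv⟩ := mem_filter.1 hJ
  rw [filter_isIndepFinset_union_closedNeighborhood (mem_indepSubsets.1 hJ).2 hJv, sum_insert]
  exact fun h => G.notMem_neighborFinset_self v
    (freeNeighbors_subset v J ((mem_indepSubsets.1 h).1 (mem_singleton_self v)))

/-- With `P = (1 + lam)^d`, this is `d P Pr(v ∈ I) + (P - 1) E |I ∩ N(v)| ≤ d lam (1 + lam)^(d-1)`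
for the hard-core measure. -/
theorem sum_indepSubsets_local_le {d : ℕ} {v : V} (hv : G.degree v ≤ d) {lam : ℝ}
    (hlam : 0 ≤ lam) :
    ∑ I ∈ indepSubsets G univ,
        (d * (1 + lam) ^ d * (if v ∈ I then 1 else 0) +
          ((1 + lam) ^ d - 1) * #(I ∩ G.neighborFinset v)) * lam ^ #I ≤
      ∑ I ∈ indepSubsets G univ, d * lam * (1 + lam) ^ (d - 1) * lam ^ #I := by
  set P := (1 + lam) ^ d
  set Q := d * lam * (1 + lam) ^ (d - 1)
  set N := G.neighborFinset v
  rw [sum_indepSubsets_univ_eq_sum_closedNeighborhood v,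
    sum_indepSubsets_univ_eq_sum_closedNeighborhood v]
  refine sum_le_sum fun J hJ => ?_
  have hJN : Disjoint J N := (mem_filter.1 hJ).2.mono_right (subset_insert _ _)
  have hvJ : v ∉ J := disjoint_right.1 (mem_filter.1 hJ).2 (mem_insert_self _ _)
  have hvN : v ∉ N := G.notMem_neighborFinset_self v
  set F := freeNeighbors G v J
  have hFN : F ⊆ N := freeNeighbors_subset v J
  have hFd : #F ≤ d := (card_le_card hFN).trans ((G.card_neighborFinset_eq_degree v).trans_le hv)
  have hS : ∀ S ∈ indepSubsets G F, v ∉ J ∪ S ∧ (J ∪ S) ∩ N = S ∧ #(J ∪ S) = #J + #S := by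
    intro S hS
    have hSN : S ⊆ N := (mem_indepSubsets.1 hS).1.trans hFN
    refine ⟨fun h => (mem_union.1 h).elim hvJ fun h => hvN (hSN h), ?_,
      card_union_of_disjoint (hJN.mono_right hSN)⟩
    rw [union_inter_distrib_right, disjoint_iff_inter_eq_empty.1 hJN, empty_union,
      inter_eq_left.2 hSN]
  have hφ : ∑ S ∈ indepSubsets G F, (d * P * (if v ∈ J ∪ S then 1 else 0) +
        (P - 1) * #((J ∪ S) ∩ N)) * lam ^ #(J ∪ S) =
      lam ^ #J * ((P - 1) * ∑ S ∈ indepSubsets G F, (#S : ℝ) * lam ^ #S) := by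
    simp only [mul_sum]
    refine sum_congr rfl fun S hS' => ?_
    obtain ⟨h1, h2, h3⟩ := hS S hS'
    rw [if_neg h1, h2, h3, pow_add]
    ring
  have hψ : ∑ S ∈ indepSubsets G F, Q * lam ^ #(J ∪ S) =
      lam ^ #J * (Q * ∑ S ∈ indepSubsets G F, lam ^ #S) := by
    simp only [mul_sum]
    refine sum_congr rfl fun S hS' => ?_
    rw [(hS S hS').2.2, pow_add]
    ring
  have hv_inter : (J ∪ {v}) ∩ N = ∅ := by
    rw [union_singleton, insert_inter_of_notMem hvN, disjoint_iff_inter_eq_empty.1 hJN]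
  rw [hφ, hψ, if_pos (mem_union_right _ (mem_singleton_self v)), hv_inter, union_singleton,
    card_insert_of_notMem hvJ, card_empty, Nat.cast_zero, pow_succ]
  have hfree : lam ^ #J * ((P - 1) * ∑ S ∈ indepSubsets G F, (#S : ℝ) * lam ^ #S) ≤
      lam ^ #J * (Q * (∑ S ∈ indepSubsets G F, lam ^ #S - 1)) :=
    mul_le_mul_of_nonneg_left (sum_card_mul_pow_indepSubsets_le hFd hlam) (pow_nonneg hlam _)
  have hQ : lam ^ #J * (Q * (1 + lam)) = lam ^ #J * (d * lam * P) :=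
    congrArg _ (natCast_mul_mul_pow_sub_one_mul d lam (1 + lam))
  linarith

end Local

section Regular

variable {G : SimpleGraph V}

omit [DecidableEq V] in
theorem Zind_eq_sum_indepSubsets (lam : ℝ) :
    Zind G lam = ∑ I ∈ indepSubsets G univ, lam ^ #I := by
  rw [Zind, indepSubsets, powerset_univ]

omit [DecidableEq V] in
theorem indEnergy_eq_sum_indepSubsets (lam : ℝ) :
    indEnergy G lam = ∑ I ∈ indepSubsets G univ, (#I : ℝ) * lam ^ #I := by
  rw [indEnergy, indepSubsets, powerset_univ]

omit [DecidableEq V] in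
theorem IsRegularGraph.isRegularOfDegree {d : ℕ} (h : IsRegularGraph G d) :
    G.IsRegularOfDegree d := fun v => by
  rw [← G.card_neighborFinset_eq_degree, G.neighborFinset_eq_filter]
  exact h v

theorem SimpleGraph.IsRegularOfDegree.sum_card_inter_neighborFinset {d : ℕ}
    (hreg : G.IsRegularOfDegree d) (I : Finset V) :
    ∑ v, #(I ∩ G.neighborFinset v) = d * #I := by
  calc ∑ v, #(I ∩ G.neighborFinset v) = ∑ v, #{u ∈ I | G.Adj v u} := by
        simp only [← filter_mem_eq_inter, SimpleGraph.mem_neighborFinset]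
    _ = ∑ u ∈ I, #{v | G.Adj v u} := sum_card_bipartiteAbove_eq_sum_card_bipartiteBelow _
    _ = ∑ _u ∈ I, d := sum_congr rfl fun u _ => by
        simp_rw [G.adj_comm _ u, ← G.neighborFinset_eq_filter, G.card_neighborFinset_eq_degree,
          hreg.degree_eq]
    _ = d * #I := by rw [sum_const, smul_eq_mul, mul_comm]

theorem SimpleGraph.IsRegularOfDegree.indEnergy_mul_le {d : ℕ} (hreg : G.IsRegularOfDegree d)
    (hd : 0 < d) {lam : ℝ} (hlam : 0 ≤ lam) :
    indEnergy G lam * (2 * (1 + lam) ^ d - 1) ≤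
      Fintype.card V * (lam * (1 + lam) ^ (d - 1)) * Zind G lam := by
  have hloc := sum_le_sum fun v (_ : v ∈ univ) =>
    sum_indepSubsets_local_le (G := G) (hreg.degree_eq v).le hlam
  rw [sum_comm, sum_comm (s := univ)] at hloc
  have hvertex : ∀ I : Finset V, ∑ v, (d * (1 + lam) ^ d * (if v ∈ I then 1 else 0) +
      ((1 + lam) ^ d - 1) * #(I ∩ G.neighborFinset v)) = d * (2 * (1 + lam) ^ d - 1) * #I := by
    intro I
    have hcount : ∑ v, (if v ∈ I then (1 : ℝ) else 0) = #I := by simp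
    rw [sum_add_distrib, ← mul_sum, ← mul_sum, hcount, ← Nat.cast_sum,
      hreg.sum_card_inter_neighborFinset, Nat.cast_mul]
    ring
  simp only [← sum_mul, hvertex, sum_const, card_univ, nsmul_eq_mul] at hloc
  rw [indEnergy_eq_sum_indepSubsets, Zind_eq_sum_indepSubsets]
  refine le_of_mul_le_mul_left ?_ (Nat.cast_pos.2 hd : (0 : ℝ) < d)
  convert hloc using 1
  · rw [sum_mul, mul_sum]
    exact sum_congr rfl fun I _ => by ring
  · rw [mul_sum, mul_sum]
    exact sum_congr rfl fun I _ => by ring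

end Regular

section CompleteBipartite

open Function (Embedding)

variable {α β : Type} [Fintype α] [Fintype β]

theorem isIndepFinset_completeBipartiteGraph_iff {I : Finset (α ⊕ β)} :
    IsIndepFinset (completeBipartiteGraph α β) I ↔
      I ⊆ univ.map Embedding.inl ∨ I ⊆ univ.map Embedding.inr := by
  constructor
  · intro h
    by_contra! hI
    obtain ⟨x, hxI, hx⟩ := not_subset.1 hI.1
    obtain ⟨y, hyI, hy⟩ := not_subset.1 hI.2
    rcases x with a | b
    · simp at hx
    rcases y with a | b'
    · exact h _ hxI _ hyI (by simp)
    · simp at hy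
  · rintro (h | h) u hu w hw
    · obtain ⟨a, -, rfl⟩ := mem_map.1 (h hu)
      obtain ⟨a', -, rfl⟩ := mem_map.1 (h hw)
      simp
    · obtain ⟨b, -, rfl⟩ := mem_map.1 (h hu)
      obtain ⟨b', -, rfl⟩ := mem_map.1 (h hw)
      simp

theorem sum_indepSubsets_completeBipartiteGraph {M : Type*} [AddCommGroup M] (f : ℕ → M) :
    ∑ I ∈ indepSubsets (completeBipartiteGraph α β) univ, f #I =
      ∑ m ∈ range (Fintype.card α + 1), (Fintype.card α).choose m • f m +
        ∑ m ∈ range (Fintype.card β + 1), (Fintype.card β).choose m • f m - f 0 := by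
  set L : Finset (α ⊕ β) := univ.map Embedding.inl
  set R : Finset (α ⊕ β) := univ.map Embedding.inr
  have hunion : indepSubsets (completeBipartiteGraph α β) univ = L.powerset ∪ R.powerset := by
    ext I
    simp [isIndepFinset_completeBipartiteGraph_iff, L, R]
  have hinter : L.powerset ∩ R.powerset = {∅} := by
    ext S
    rw [mem_inter, mem_powerset, mem_powerset, ← subset_inter_iff,
      disjoint_iff_inter_eq_empty.1 (disjoint_map_inl_map_inr _ _), subset_empty, mem_singleton]
  rw [eq_sub_iff_add_eq, hunion, ← card_empty, ← sum_singleton (fun I => f #I), ← hinter,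
    sum_union_inter, sum_powerset_apply_card, sum_powerset_apply_card, card_map, card_map,
    card_univ, card_univ]

theorem Zind_completeBipartiteGraph (lam : ℝ) :
    Zind (completeBipartiteGraph α β) lam =
      (1 + lam) ^ Fintype.card α + (1 + lam) ^ Fintype.card β - 1 := by
  simp only [Zind_eq_sum_indepSubsets, sum_indepSubsets_completeBipartiteGraph, nsmul_eq_mul,
    sum_range_choose_mul_pow, pow_zero]

theorem indEnergy_completeBipartiteGraph (lam : ℝ) :
    indEnergy (completeBipartiteGraph α β) lam =
      Fintype.card α * lam * (1 + lam) ^ (Fintype.card α - 1) +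
        Fintype.card β * lam * (1 + lam) ^ (Fintype.card β - 1) := by
  rw [indEnergy_eq_sum_indepSubsets,
    sum_indepSubsets_completeBipartiteGraph fun m => (m : ℝ) * lam ^ m]
  simp only [nsmul_eq_mul, sum_range_choose_mul_mul_pow, Nat.cast_zero, zero_mul, sub_zero]

end CompleteBipartite

theorem hardcore_occupancy_fraction_le_general (d : ℕ) (hd : 1 ≤ d)
    {V : Type} [Fintype V] (G : SimpleGraph V)
    (hreg : IsRegularGraph G d)
    (lam : ℝ) (hlam : 0 < lam) :
    (1 / (Fintype.card V : ℝ)) * (indEnergy G lam / Zind G lam) ≤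
      (1 / (2 * (d : ℝ))) *
        (indEnergy (completeBipartiteGraph (Fin d) (Fin d)) lam /
          Zind (completeBipartiteGraph (Fin d) (Fin d)) lam) := by
  have hbound := hreg.isRegularOfDegree.indEnergy_mul_le hd hlam.le
  have hP : 0 < 2 * (1 + lam) ^ d - 1 := by
    linarith [one_le_pow₀ (n := d) (by linarith : 1 ≤ 1 + lam)]
  have hK : (1 / (2 * (d : ℝ))) *
      (indEnergy (completeBipartiteGraph (Fin d) (Fin d)) lam /
        Zind (completeBipartiteGraph (Fin d) (Fin d)) lam) =
      lam * (1 + lam) ^ (d - 1) / (2 * (1 + lam) ^ d - 1) := by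
    rw [Zind_completeBipartiteGraph, indEnergy_completeBipartiteGraph, Fintype.card_fin,
      ← two_mul, ← two_mul, mul_assoc, ← mul_assoc 2, mul_div_assoc, ← mul_assoc,
      one_div_mul_cancel (by positivity), one_mul]
  have hZ : 0 ≤ Zind G lam := by
    rw [Zind_eq_sum_indepSubsets]
    exact sum_nonneg fun _ _ => by positivity
  rw [hK, one_div_mul_eq_div, div_div]
  refine div_le_of_le_mul₀ (by positivity) (by positivity) ?_
  rw [div_mul_eq_mul_div, le_div_iff₀ hP]
  linarith

/-- the hard-core occupancy fraction of a `d`-regular graph `G` on `n ≥ 1`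
vertices is at most that of `K_{d,d}`. -/
theorem hardcore_occupancy_fraction_le (d : ℕ) (hd : 1 ≤ d)
    {V : Type} [Fintype V] [DecidableEq V] (G : SimpleGraph V)
    (hn : 1 ≤ Fintype.card V) (hreg : IsRegularGraph G d)
    (lam : ℝ) (hlam : 0 < lam) :
    (1 / (Fintype.card V : ℝ)) * (indEnergy G lam / Zind G lam) ≤
      (1 / (2 * (d : ℝ))) *
        (indEnergy (completeBipartiteGraph (Fin d) (Fin d)) lam /
          Zind (completeBipartiteGraph (Fin d) (Fin d)) lam) :=
  hardcore_occupancy_fraction_le_general d hd G hreg lam hlam
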